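/- arXiv:1301.5413 — 5 statements merged into one kernel-verified Lean document; each statement's English description precedes it below -/
import Mathlib

section
/- Fix real parameters α, γ, δ, ε > 0. The function g defined for β ∈ (1/ε, ∞) by g(β) = (∑_{n=1}^∞ (n+1)^{-β} e^{-n·P₃₄(β)})·(ζ(εβ) - 1)/(1 + e^{δβ})² is strictly decreasing on (1/ε, ∞), tends to +∞ as β decreases to 1/ε, and tends to 0 as β → +∞. Consequently there exists a unique β₁ ∈ (1/ε, ∞) with g(β₁) = 1; in particular ε·β₁ > 1. (Lemma 1 of the paper defining the transition parameter β₁, together with the Remark that εβ₁ > 1.) -/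
open Filter

/-- `P₃₄(β) = γβ + log(1 + e^{δβ})`. -/
noncomputable def P34 (γ δ β : ℝ) : ℝ := γ * β + Real.log (1 + Real.exp (δ * β))

/-- Real Riemann zeta: `ζ(s) = ∑_{m=1}^∞ m^{-s}` (indexed by `n : ℕ` via `m = n+1`). -/
noncomputable def zetaR (s : ℝ) : ℝ := ∑' n : ℕ, ((n : ℝ) + 1) ^ (-s)

/-- `Σ₂(Z,β) = ∑_{n=1}^∞ (n+1)^{-β} e^{-nZ}` (indexed by `n : ℕ` via `n ↦ n+1`). -/
noncomputable def S2 (β Z : ℝ) : ℝ :=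
  ∑' n : ℕ, ((n : ℝ) + 2) ^ (-β) * Real.exp (-((n : ℝ) + 1) * Z)

/-- `g(β) = Σ₂(P₃₄(β),β) · (ζ(εβ) - 1) / (1 + e^{δβ})²`. -/
noncomputable def g (γ δ ε β : ℝ) : ℝ :=
  S2 β (P34 γ δ β) * (zetaR (ε * β) - 1) / (1 + Real.exp (δ * β)) ^ 2

/-!
Write `g β = F β * (ζ(εβ) - 1)` with `F β = Σ₂(P₃₄(β), β) / (1 + e^{δβ})²`. Every term of `Σ₂(Z, β)`
decreases in both `β` and `Z`, and `P₃₄` and the denominator increase, so `F` is positive,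
continuous and strictly decreasing on `[0, ∞)`. The tail `ζ(s) - 1 = ∑ (n+2)^{-s}` is positive,
continuous and strictly decreasing on `(1, ∞)`; it tends to `∞` as `s → 1⁺` because its partial
sums are continuous in `s` and diverge at `s = 1` (harmonic series), and to `0` as `s → ∞` by
dominated convergence. Hence `g` is strictly decreasing from `∞` to `0` on `(1/ε, ∞)`, and the
intermediate value theorem gives the unique `β₁`.
-/

open Set Topology

lemma mem_Ioi_one_div_iff_one_lt_mul {ε β : ℝ} (hε : 0 < ε) : β ∈ Ioi (1 / ε) ↔ 1 < ε * β := by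
  rw [mem_Ioi, div_lt_iff₀' hε]

lemma StrictAntiOn.existsUnique_eq_of_tendsto {α β : Type*} [ConditionallyCompleteLinearOrder α]
    [TopologicalSpace α] [OrderTopology α] [DenselyOrdered α] [NoMaxOrder α] [LinearOrder β]
    [TopologicalSpace β] [OrderClosedTopology β] [NoMaxOrder β] {f : α → β} {a : α} {b c : β}
    (hf : StrictAntiOn f (Ioi a)) (hcont : ContinuousOn f (Ioi a))
    (hleft : Tendsto f (𝓝[>] a) atTop) (hright : Tendsto f atTop (𝓝 b)) (hbc : b < c) :
    ∃! x, x ∈ Ioi a ∧ f x = c := by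
  obtain ⟨x, hcx, hx⟩ :=
    ((hleft.eventually (eventually_gt_atTop c)).and self_mem_nhdsWithin).exists
  obtain ⟨y, hyc, hxy⟩ :=
    ((hright.eventually (eventually_lt_nhds hbc)).and (eventually_gt_atTop x)).exists
  have hIcc : Icc x y ⊆ Ioi a := fun z hz => lt_of_lt_of_le hx hz.1
  obtain ⟨z, hz, hfz⟩ :=
    intermediate_value_Icc' hxy.le (hcont.mono hIcc) ⟨hyc.le, hcx.le⟩
  exact ⟨z, ⟨hIcc hz, hfz⟩, fun w hw => hf.injOn hw.1 (hIcc hz) (hw.2.trans hfz.symm)⟩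

noncomputable def zetaTail (s : ℝ) : ℝ := ∑' n : ℕ, ((n : ℝ) + 2) ^ (-s)

lemma summable_zetaTail_iff {s : ℝ} : Summable (fun n : ℕ => ((n : ℝ) + 2) ^ (-s)) ↔ 1 < s := by
  have hshift := summable_nat_add_iff 2 (f := fun n : ℕ => (n : ℝ) ^ (-s))
  push_cast at hshift
  rw [hshift, Real.summable_nat_rpow, neg_lt_neg_iff]

lemma zetaR_sub_one {s : ℝ} (hs : 1 < s) : zetaR s - 1 = zetaTail s := by
  have hsum : Summable fun n : ℕ => ((n : ℝ) + 1) ^ (-s) :=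
    (summable_nat_add_iff 1).1 <| (summable_zetaTail_iff.2 hs).congr fun n => by push_cast; ring_nf
  rw [zetaR, hsum.tsum_eq_zero_add, zetaTail]
  norm_num [add_assoc, one_add_one_eq_two]

lemma zetaTail_strictAntiOn : StrictAntiOn zetaTail (Ioi 1) := by
  intro s hs t ht hst
  refine (summable_zetaTail_iff.2 ht).tsum_lt_tsum (i := 0) (fun n => ?_) ?_
    (summable_zetaTail_iff.2 hs)
  · exact Real.rpow_le_rpow_of_exponent_le (by linarith [n.cast_nonneg (α := ℝ)]) (by linarith)
  · exact Real.rpow_lt_rpow_of_exponent_lt (by norm_num) (by linarith)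

lemma zetaTail_pos {s : ℝ} (hs : 1 < s) : 0 < zetaTail s :=
  (summable_zetaTail_iff.2 hs).tsum_pos (fun _ => by positivity) 0 (by positivity)

lemma continuousOn_zetaTail : ContinuousOn zetaTail (Ioi 1) := by
  refine continuousOn_of_forall_continuousAt fun s hs => ?_
  obtain ⟨a, h1a, has⟩ := exists_between (mem_Ioi.1 hs)
  refine ContinuousOn.continuousAt ?_ (Ici_mem_nhds has)
  refine continuousOn_tsum (fun n => by fun_prop (disch := positivity))
    (summable_zetaTail_iff.2 h1a) fun n t ht => ?_
  rw [Real.norm_of_nonneg (by positivity)]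
  exact Real.rpow_le_rpow_of_exponent_le (by linarith [n.cast_nonneg (α := ℝ)])
    (by linarith [mem_Ici.1 ht])

lemma tendsto_zetaTail_nhdsGT_one : Tendsto zetaTail (𝓝[>] 1) atTop := by
  refine tendsto_atTop.2 fun M => ?_
  have hdiv : Tendsto (fun N => ∑ n ∈ Finset.range N, ((n : ℝ) + 2) ^ (-(1 : ℝ))) atTop atTop :=
    (not_summable_iff_tendsto_nat_atTop_of_nonneg fun _ => by positivity).1
      (summable_zetaTail_iff.not.2 (lt_irrefl 1))
  obtain ⟨N, hN⟩ := (hdiv.eventually (eventually_gt_atTop M)).exists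
  have hcont : Continuous fun s : ℝ => ∑ n ∈ Finset.range N, ((n : ℝ) + 2) ^ (-s) := by
    fun_prop (disch := positivity)
  filter_upwards [(hcont.tendsto 1).eventually (eventually_gt_nhds hN) |>.filter_mono
    nhdsWithin_le_nhds, self_mem_nhdsWithin] with s hMs hs
  exact hMs.le.trans <|
    (summable_zetaTail_iff.2 hs).sum_le_tsum _ fun _ _ => by positivity

lemma tendsto_zetaTail_atTop : Tendsto zetaTail atTop (𝓝 0) := by
  have hterm (n : ℕ) : Tendsto (fun s : ℝ => ((n : ℝ) + 2) ^ (-s)) atTop (𝓝 0) :=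
    (tendsto_rpow_atBot_of_base_gt_one _ (by linarith [n.cast_nonneg (α := ℝ)])).comp
      tendsto_neg_atTop_atBot
  have hlim := tendsto_tsum_of_dominated_convergence (summable_zetaTail_iff.2 one_lt_two) hterm <|
    (eventually_ge_atTop 2).mono fun s hs n => by
      rw [Real.norm_of_nonneg (by positivity)]
      exact Real.rpow_le_rpow_of_exponent_le (by linarith [n.cast_nonneg (α := ℝ)]) (by linarith)
  rwa [tsum_zero] at hlim

noncomputable def S2Term (β Z : ℝ) (n : ℕ) : ℝ :=
  ((n : ℝ) + 2) ^ (-β) * Real.exp (-((n : ℝ) + 1) * Z)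

lemma norm_S2Term_le {β Z c : ℝ} (hβ : 0 ≤ β) (hc : 0 ≤ c) (hcZ : c ≤ Z) (n : ℕ) :
    ‖S2Term β Z n‖ ≤ Real.exp (n * -c) := by
  rw [S2Term, Real.norm_of_nonneg (by positivity)]
  refine (mul_le_of_le_one_left (Real.exp_pos _).le ?_).trans (Real.exp_le_exp.2 ?_)
  · exact Real.rpow_le_one_of_one_le_of_nonpos (by linarith [n.cast_nonneg (α := ℝ)]) (by linarith)
  · nlinarith [n.cast_nonneg (α := ℝ)]

lemma summable_S2Term {β Z : ℝ} (hβ : 0 ≤ β) (hZ : 0 < Z) : Summable (S2Term β Z) :=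
  .of_norm_bounded (Real.summable_exp_nat_mul_iff.2 (neg_neg_of_pos hZ))
    (norm_S2Term_le hβ hZ.le le_rfl)

lemma S2_lt_S2 {β β' Z Z' : ℝ} (hβ : 0 ≤ β) (hZ : 0 < Z) (hββ' : β < β') (hZZ' : Z ≤ Z') :
    S2 β' Z' < S2 β Z := by
  refine (summable_S2Term (hβ.trans hββ'.le) (hZ.trans_le hZZ')).tsum_lt_tsum (i := 0)
    (fun n => ?_) ?_ (summable_S2Term hβ hZ)
  · exact mul_le_mul
      (Real.rpow_le_rpow_of_exponent_le (by linarith [n.cast_nonneg (α := ℝ)]) (by linarith))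
      (Real.exp_le_exp.2 (by nlinarith [n.cast_nonneg (α := ℝ)])) (by positivity) (by positivity)
  · exact mul_lt_mul (Real.rpow_lt_rpow_of_exponent_lt (by norm_num) (by linarith))
      (Real.exp_le_exp.2 (by nlinarith)) (by positivity) (by positivity)

lemma continuousOn_S2 {c : ℝ} (hc : 0 < c) :
    ContinuousOn (fun p : ℝ × ℝ => S2 p.1 p.2) (Ici 0 ×ˢ Ici c) :=
  continuousOn_tsum (fun n => by fun_prop (disch := positivity))
    (Real.summable_exp_nat_mul_iff.2 (neg_neg_of_pos hc))
    fun n p hp => norm_S2Term_le hp.1 hc.le hp.2 n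

lemma P34_monotone {γ δ : ℝ} (hγ : 0 ≤ γ) (hδ : 0 ≤ δ) : Monotone (P34 γ δ) := by
  intro a b hab
  unfold P34
  gcongr

lemma log_two_le_P34 {γ δ β : ℝ} (hγ : 0 ≤ γ) (hδ : 0 ≤ δ) (hβ : 0 ≤ β) :
    Real.log 2 ≤ P34 γ δ β := by
  have h : Real.log 2 ≤ Real.log (1 + Real.exp (δ * β)) := by
    gcongr
    linarith [Real.one_le_exp (mul_nonneg hδ hβ)]
  unfold P34
  nlinarith

lemma continuous_P34 (γ δ : ℝ) : Continuous (P34 γ δ) := by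
  unfold P34
  exact (continuous_const_mul γ).add ((by fun_prop : Continuous fun β => 1 + Real.exp (δ * β)).log
    fun β => by positivity)

noncomputable def gPrefactor (γ δ β : ℝ) : ℝ := S2 β (P34 γ δ β) / (1 + Real.exp (δ * β)) ^ 2

lemma gPrefactor_pos {γ δ β : ℝ} (hγ : 0 ≤ γ) (hδ : 0 ≤ δ) (hβ : 0 ≤ β) :
    0 < gPrefactor γ δ β := by
  have hP : 0 < P34 γ δ β := (Real.log_pos one_lt_two).trans_le (log_two_le_P34 hγ hδ hβ)
  have hS : 0 < S2 β (P34 γ δ β) :=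
    (summable_S2Term hβ hP).tsum_pos (fun n => by unfold S2Term; positivity) 0
      (by unfold S2Term; positivity)
  exact div_pos hS (by positivity)

lemma gPrefactor_strictAntiOn {γ δ : ℝ} (hγ : 0 ≤ γ) (hδ : 0 ≤ δ) :
    StrictAntiOn (gPrefactor γ δ) (Ici 0) := by
  intro a ha b hb hab
  have hPa : 0 < P34 γ δ a := (Real.log_pos one_lt_two).trans_le (log_two_le_P34 hγ hδ ha)
  have hS : S2 b (P34 γ δ b) < S2 a (P34 γ δ a) :=
    S2_lt_S2 ha hPa hab (P34_monotone hγ hδ hab.le)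
  have hD : (1 + Real.exp (δ * a)) ^ 2 ≤ (1 + Real.exp (δ * b)) ^ 2 := by gcongr
  calc gPrefactor γ δ b ≤ S2 b (P34 γ δ b) / (1 + Real.exp (δ * a)) ^ 2 :=
        div_le_div_of_nonneg_left (tsum_nonneg fun n => by positivity) (by positivity) hD
    _ < gPrefactor γ δ a := div_lt_div_of_pos_right hS (by positivity)

lemma continuousOn_gPrefactor {γ δ : ℝ} (hγ : 0 ≤ γ) (hδ : 0 ≤ δ) :
    ContinuousOn (gPrefactor γ δ) (Ici 0) := by
  have hS : ContinuousOn (fun β => S2 β (P34 γ δ β)) (Ici 0) :=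
    (continuousOn_S2 (Real.log_pos one_lt_two)).comp
      (continuous_id.prodMk (continuous_P34 γ δ)).continuousOn
      fun β hβ => ⟨hβ, log_two_le_P34 hγ hδ hβ⟩
  exact hS.div (by fun_prop) fun β _ => by positivity

lemma g_eqOn {γ δ ε : ℝ} (hε : 0 < ε) :
    EqOn (g γ δ ε) (fun β => gPrefactor γ δ β * zetaTail (ε * β)) (Ioi (1 / ε)) := by
  intro β hβ
  simp only [g, gPrefactor, zetaR_sub_one ((mem_Ioi_one_div_iff_one_lt_mul hε).1 hβ)]
  ring

lemma tendsto_const_mul_nhdsGT_one_div {ε : ℝ} (hε : 0 < ε) :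
    Tendsto (ε * ·) (𝓝[>] (1 / ε)) (𝓝[>] 1) := by
  refine tendsto_nhdsWithin_iff.2 ⟨?_, eventually_nhdsWithin_of_forall fun β hβ =>
    (mem_Ioi_one_div_iff_one_lt_mul hε).1 hβ⟩
  have h := (continuous_const_mul ε).tendsto (1 / ε)
  rw [mul_one_div_cancel hε.ne'] at h
  exact h.mono_left nhdsWithin_le_nhds

lemma Ioi_one_div_subset_Ici_zero {ε : ℝ} (hε : 0 < ε) : Ioi (1 / ε) ⊆ Ici 0 :=
  fun _ hβ => (one_div_pos.2 hε).le.trans (le_of_lt hβ)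

section g

variable {γ δ ε : ℝ}

lemma g_strictAntiOn (hγ : 0 ≤ γ) (hδ : 0 ≤ δ) (hε : 0 < ε) :
    StrictAntiOn (g γ δ ε) (Ioi (1 / ε)) := by
  intro a ha b hb hab
  have hεb := (mem_Ioi_one_div_iff_one_lt_mul hε).1 hb
  rw [g_eqOn hε ha, g_eqOn hε hb]
  exact mul_lt_mul''
    (gPrefactor_strictAntiOn hγ hδ (Ioi_one_div_subset_Ici_zero hε ha)
      (Ioi_one_div_subset_Ici_zero hε hb) hab)
    (zetaTail_strictAntiOn ((mem_Ioi_one_div_iff_one_lt_mul hε).1 ha) hεb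
      (mul_lt_mul_of_pos_left hab hε))
    (gPrefactor_pos hγ hδ (Ioi_one_div_subset_Ici_zero hε hb)).le (zetaTail_pos hεb).le

lemma continuousOn_g (hγ : 0 ≤ γ) (hδ : 0 ≤ δ) (hε : 0 < ε) :
    ContinuousOn (g γ δ ε) (Ioi (1 / ε)) := by
  refine ContinuousOn.congr ?_ (g_eqOn hε)
  exact ((continuousOn_gPrefactor hγ hδ).mono (Ioi_one_div_subset_Ici_zero hε)).mul
    (continuousOn_zetaTail.comp (continuous_const_mul ε).continuousOn
      fun β hβ => (mem_Ioi_one_div_iff_one_lt_mul hε).1 hβ)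

lemma tendsto_g_nhdsGT (hγ : 0 ≤ γ) (hδ : 0 ≤ δ) (hε : 0 < ε) :
    Tendsto (g γ δ ε) (𝓝[>] (1 / ε)) atTop := by
  have hpref : Tendsto (gPrefactor γ δ) (𝓝[>] (1 / ε)) (𝓝 (gPrefactor γ δ (1 / ε))) :=
    (continuousOn_gPrefactor hγ hδ (1 / ε) (one_div_pos.2 hε).le).mono
      (Ioi_one_div_subset_Ici_zero hε)
  refine (Tendsto.pos_mul_atTop (gPrefactor_pos hγ hδ (one_div_pos.2 hε).le) hpref
    (tendsto_zetaTail_nhdsGT_one.comp (tendsto_const_mul_nhdsGT_one_div hε))).congr' ?_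
  filter_upwards [self_mem_nhdsWithin] with β hβ
  exact (g_eqOn hε hβ).symm

lemma tendsto_g_atTop (hγ : 0 ≤ γ) (hδ : 0 ≤ δ) (hε : 0 < ε) :
    Tendsto (g γ δ ε) atTop (𝓝 0) := by
  have hbound : Tendsto (fun β => gPrefactor γ δ 0 * zetaTail (ε * β)) atTop (𝓝 0) := by
    simpa using (tendsto_zetaTail_atTop.comp (tendsto_id.const_mul_atTop hε)).const_mul
      (gPrefactor γ δ 0)
  have hsandwich (β : ℝ) (hβ : β ∈ Ioi (1 / ε)) :
      0 ≤ g γ δ ε β ∧ g γ δ ε β ≤ gPrefactor γ δ 0 * zetaTail (ε * β) := by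
    have hZ := (zetaTail_pos ((mem_Ioi_one_div_iff_one_lt_mul hε).1 hβ)).le
    have hβ0 := Ioi_one_div_subset_Ici_zero hε hβ
    rw [g_eqOn hε hβ]
    exact ⟨mul_nonneg (gPrefactor_pos hγ hδ hβ0).le hZ, mul_le_mul_of_nonneg_right
      ((gPrefactor_strictAntiOn hγ hδ).antitoneOn self_mem_Ici hβ0 hβ0) hZ⟩
  have hev := eventually_gt_atTop (1 / ε)
  exact squeeze_zero' (hev.mono fun β hβ => (hsandwich β hβ).1)
    (hev.mono fun β hβ => (hsandwich β hβ).2) hbound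

end g

theorem stmt_3_general (γ δ ε : ℝ) (hγ : 0 < γ) (hδ : 0 < δ) (hε : 0 < ε) :
    StrictAntiOn (g γ δ ε) (Set.Ioi (1 / ε)) ∧
    Tendsto (g γ δ ε) (nhdsWithin (1 / ε) (Set.Ioi (1 / ε))) atTop ∧
    Tendsto (g γ δ ε) atTop (nhds 0) ∧
    (∃! β₁, β₁ ∈ Set.Ioi (1 / ε) ∧ g γ δ ε β₁ = 1) ∧
    (∀ β₁, β₁ ∈ Set.Ioi (1 / ε) → g γ δ ε β₁ = 1 → 1 < ε * β₁) := by
  have hanti := g_strictAntiOn hγ.le hδ.le hε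
  have hleft := tendsto_g_nhdsGT hγ.le hδ.le hε
  have hright := tendsto_g_atTop hγ.le hδ.le hε
  exact ⟨hanti, hleft, hright,
    hanti.existsUnique_eq_of_tendsto (continuousOn_g hγ.le hδ.le hε) hleft hright one_pos,
    fun β₁ hβ₁ _ => (mem_Ioi_one_div_iff_one_lt_mul hε).1 hβ₁⟩

/-- Lemma 1 (definition of `β₁`): `g` is strictly decreasing on `(1/ε, ∞)`, tends to `+∞`
at `1/ε⁺` and to `0` at `+∞`; hence there is a unique `β₁ ∈ (1/ε, ∞)` with `g(β₁) = 1`,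
and in particular `ε β₁ > 1`. -/
theorem stmt_3 (α γ δ ε : ℝ) (hα : 0 < α) (hγ : 0 < γ) (hδ : 0 < δ) (hε : 0 < ε) :
    StrictAntiOn (g γ δ ε) (Set.Ioi (1 / ε)) ∧
    Tendsto (g γ δ ε) (nhdsWithin (1 / ε) (Set.Ioi (1 / ε))) atTop ∧
    Tendsto (g γ δ ε) atTop (nhds 0) ∧
    (∃! β₁, β₁ ∈ Set.Ioi (1 / ε) ∧ g γ δ ε β₁ = 1) ∧
    (∀ β₁, β₁ ∈ Set.Ioi (1 / ε) → g γ δ ε β₁ = 1 → 1 < ε * β₁) :=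
  stmt_3_general γ δ ε hγ hδ hε
end

section
/- Fix real parameters α, γ, δ, ε > 0 and fix β > 0. Define h(Z) = Σ₂(Z,β)·Σ₃(Z,β) for Z > P₃₄(β) (both series converge there). Then h is continuous and strictly decreasing on (P₃₄(β), ∞) and tends to 0 as Z → +∞. Moreover, if either εβ ≤ 1, or εβ > 1 and Σ₂(P₃₄(β),β)·Σ₃(P₃₄(β),β) > 1, then there exists a unique Z̃_c(β) > P₃₄(β) such that: h(Z) < 1 for every Z > Z̃_c(β); h(Z) > 1 for every Z ∈ (P₃₄(β), Z̃_c(β)); and h(Z̃_c(β)) = 1. (Lemma 1 of the paper, fixed-β part.) -/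
open Filter

/-- `Σ₃(Z,β) = (1+e^{δβ})^{-2} ∑_{n=1}^∞ (n+1)^{-εβ} e^{n(P₃₄(β)-Z)}`. -/
noncomputable def S3 (γ δ ε β Z : ℝ) : ℝ :=
  (∑' n : ℕ, ((n : ℝ) + 2) ^ (-(ε * β)) * Real.exp (((n : ℝ) + 1) * (P34 γ δ β - Z))) /
    (1 + Real.exp (δ * β)) ^ 2

noncomputable def Faux (p t : ℝ) : ℝ :=
  ∑' n : ℕ, ((n : ℝ) + 2) ^ (-p) * Real.exp (((n : ℝ) + 1) * t)

lemma exp_pow_aux (t : ℝ) (n : ℕ) :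
    Real.exp (((n : ℝ) + 1) * t) = Real.exp t ^ (n + 1) := by
  rw [← Real.exp_nat_mul]; push_cast; ring_nf

lemma coeff_le_one (p : ℝ) (hp : 0 ≤ p) (n : ℕ) : ((n : ℝ) + 2) ^ (-p) ≤ 1 :=
  Real.rpow_le_one_of_one_le_of_nonpos (by nlinarith [Nat.cast_nonneg (α := ℝ) n]) (by linarith)

lemma summ_aux (p t : ℝ) (hp : 0 ≤ p) (ht : t < 0) :
    Summable (fun n : ℕ => ((n : ℝ) + 2) ^ (-p) * Real.exp (((n : ℝ) + 1) * t)) := by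
  have h1 : Real.exp t < 1 := Real.exp_lt_one_iff.mpr ht
  refine Summable.of_nonneg_of_le (fun n => by positivity) (fun n => ?_)
    ((summable_geometric_of_lt_one (Real.exp_pos t).le h1).mul_right (Real.exp t))
  have h2 := coeff_le_one p hp n
  have h3 : Real.exp (((n : ℝ) + 1) * t) = Real.exp t ^ n * Real.exp t := by
    rw [exp_pow_aux, pow_succ]
  rw [h3]
  have : (0:ℝ) < Real.exp t ^ n * Real.exp t := by positivity
  nlinarith

lemma psum_aux (p : ℝ) (hp : 1 < p) :
    Summable (fun n : ℕ => ((n : ℝ) + 2) ^ (-p)) := by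
  have h := (Real.summable_nat_rpow (p := -p)).mpr (by linarith)
  have h2 := h.comp_injective (add_left_injective 2)
  refine h2.congr fun n => ?_
  show ((n + 2 : ℕ) : ℝ) ^ (-p) = _
  push_cast
  ring_nf

lemma summ_aux0 (p : ℝ) (hp : 1 < p) (t : ℝ) (ht : t ≤ 0) :
    Summable (fun n : ℕ => ((n : ℝ) + 2) ^ (-p) * Real.exp (((n : ℝ) + 1) * t)) := by
  refine Summable.of_nonneg_of_le (fun n => by positivity) (fun n => ?_) (psum_aux p hp)
  have : Real.exp (((n : ℝ) + 1) * t) ≤ 1 := Real.exp_le_one_iff.mpr (by nlinarith [Nat.cast_nonneg (α := ℝ) n])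
  nlinarith [Real.rpow_nonneg (show (0:ℝ) ≤ (n:ℝ)+2 by positivity) (-p), Real.exp_pos (((n : ℝ) + 1) * t)]

lemma Faux_pos (p t : ℝ)
    (hs : Summable (fun n : ℕ => ((n : ℝ) + 2) ^ (-p) * Real.exp (((n : ℝ) + 1) * t))) :
    0 < Faux p t :=
  Summable.tsum_pos hs (fun n => by positivity) 0 (by positivity)

lemma Faux_lt (p t₁ t₂ : ℝ) (hp : 0 ≤ p) (h12 : t₁ < t₂) (ht₂ : t₂ < 0) :
    Faux p t₁ < Faux p t₂ := by
  refine Summable.tsum_lt_tsum (i := 0) (fun n => ?_) ?_ (summ_aux p t₁ hp (by linarith)) (summ_aux p t₂ hp ht₂)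
  · have : Real.exp (((n : ℝ) + 1) * t₁) ≤ Real.exp (((n : ℝ) + 1) * t₂) :=
      Real.exp_le_exp.mpr (by nlinarith [Nat.cast_nonneg (α := ℝ) n])
    have h0 : (0:ℝ) ≤ ((n : ℝ) + 2) ^ (-p) := by positivity
    nlinarith
  · simp only [Nat.cast_zero]
    have : Real.exp ((0 + 1) * t₁) < Real.exp ((0 + 1) * t₂) := Real.exp_lt_exp.mpr (by linarith)
    have h0 : (0:ℝ) < ((0:ℝ) + 2) ^ (-p) := by positivity
    nlinarith

lemma Faux_le (p t t₀ : ℝ) (hp : 0 ≤ p) (ht₀ : t₀ < 0) (h : t ≤ t₀) :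
    Faux p t ≤ Real.exp (t - t₀) * Faux p t₀ := by
  rw [Faux, Faux, ← tsum_mul_left]
  refine Summable.tsum_le_tsum (fun n => ?_) (summ_aux p t hp (by linarith))
    (((summ_aux p t₀ hp ht₀)).mul_left _)
  have h1 : Real.exp (((n : ℝ) + 1) * t) =
      Real.exp (((n : ℝ) + 1) * (t - t₀)) * Real.exp (((n : ℝ) + 1) * t₀) := by
    rw [← Real.exp_add]; ring_nf
  have h2 : Real.exp (((n : ℝ) + 1) * (t - t₀)) ≤ Real.exp (t - t₀) :=
    Real.exp_le_exp.mpr (by nlinarith [Nat.cast_nonneg (α := ℝ) n])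
  have h0 : (0:ℝ) ≤ ((n : ℝ) + 2) ^ (-p) := by positivity
  have h3 : (0:ℝ) < Real.exp (((n : ℝ) + 1) * t₀) := Real.exp_pos _
  rw [h1]
  nlinarith [mul_le_mul_of_nonneg_right (mul_le_mul_of_nonneg_left h2 h0) h3.le]

lemma Faux_contOn (p t₀ : ℝ) (hp : 0 ≤ p)
    (hs : Summable (fun n : ℕ => ((n : ℝ) + 2) ^ (-p) * Real.exp (((n : ℝ) + 1) * t₀))) :
    ContinuousOn (Faux p) (Set.Iic t₀) := by
  refine continuousOn_tsum (fun n => (by fun_prop : Continuous fun t : ℝ =>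
    ((n : ℝ) + 2) ^ (-p) * Real.exp (((n : ℝ) + 1) * t)).continuousOn) hs fun n t ht => ?_
  have h0 : (0:ℝ) ≤ ((n : ℝ) + 2) ^ (-p) := by positivity
  have h2 : Real.exp (((n : ℝ) + 1) * t) ≤ Real.exp (((n : ℝ) + 1) * t₀) :=
    Real.exp_le_exp.mpr (by nlinarith [Nat.cast_nonneg (α := ℝ) n, Set.mem_Iic.mp ht])
  rw [Real.norm_eq_abs, abs_of_nonneg (by positivity)]
  nlinarith [Real.exp_pos (((n : ℝ) + 1) * t)]

/-- Lemma 1, fixed-`β` part: `h(Z) = Σ₂(Z,β)·Σ₃(Z,β)` is well defined (both series converge),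
continuous and strictly decreasing on `(P₃₄(β), ∞)`, tends to `0` at `+∞`; and if either
`εβ ≤ 1`, or `εβ > 1` and `Σ₂Σ₃ > 1` at `Z = P₃₄(β)`, then there is a unique critical
`Z̃_c(β) > P₃₄(β)` where `h` crosses `1`. -/
theorem stmt_4 (α γ δ ε β : ℝ) (hα : 0 < α) (hγ : 0 < γ) (hδ : 0 < δ) (hε : 0 < ε)
    (hβ : 0 < β) :
    (∀ Z, P34 γ δ β < Z →
      Summable (fun n : ℕ => ((n : ℝ) + 2) ^ (-β) * Real.exp (-((n : ℝ) + 1) * Z)) ∧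
      Summable (fun n : ℕ =>
        ((n : ℝ) + 2) ^ (-(ε * β)) * Real.exp (((n : ℝ) + 1) * (P34 γ δ β - Z)))) ∧
    ContinuousOn (fun Z => S2 β Z * S3 γ δ ε β Z) (Set.Ioi (P34 γ δ β)) ∧
    StrictAntiOn (fun Z => S2 β Z * S3 γ δ ε β Z) (Set.Ioi (P34 γ δ β)) ∧
    Tendsto (fun Z => S2 β Z * S3 γ δ ε β Z) atTop (nhds 0) ∧
    ((ε * β ≤ 1 ∨ (1 < ε * β ∧ 1 < S2 β (P34 γ δ β) * S3 γ δ ε β (P34 γ δ β))) →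
      ∃! Zc, P34 γ δ β < Zc ∧
        (∀ Z, Zc < Z → S2 β Z * S3 γ δ ε β Z < 1) ∧
        (∀ Z, P34 γ δ β < Z → Z < Zc → 1 < S2 β Z * S3 γ δ ε β Z) ∧
        S2 β Zc * S3 γ δ ε β Zc = 1) := by
  set P := P34 γ δ β with hPdef
  set c2 : ℝ := (1 + Real.exp (δ * β)) ^ 2 with hc2def
  have hc2 : 0 < c2 := by positivity
  have hP0 : 0 < P := by
    have h1 : 0 < Real.log (1 + Real.exp (δ * β)) :=
      Real.log_pos (by nlinarith [Real.exp_pos (δ * β)])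
    have h2 : 0 < γ * β := by positivity
    rw [hPdef, P34]; linarith
  set g : ℝ → ℝ := fun Z => Faux β (-Z) * (Faux (ε * β) (P - Z) / c2) with hgdef
  have heq : ∀ Z : ℝ, S2 β Z * S3 γ δ ε β Z = g Z := by
    intro Z
    have h2 : S2 β Z = Faux β (-Z) := by
      rw [S2, Faux]; congr 1; funext n; rw [neg_mul_comm]
    have h3 : S3 γ δ ε β Z = Faux (ε * β) (P - Z) / c2 := rfl
    rw [h2, h3]
  have hεβ : 0 ≤ ε * β := by positivity
  -- positivity of factors
  have hApos : ∀ Z : ℝ, 0 < Z → 0 < Faux β (-Z) := fun Z hZ =>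
    Faux_pos _ _ (summ_aux β (-Z) hβ.le (by linarith))
  have hBpos : ∀ Z : ℝ, P < Z → 0 < Faux (ε * β) (P - Z) := fun Z hZ =>
    Faux_pos _ _ (summ_aux (ε * β) (P - Z) hεβ (by linarith))
  have hgpos : ∀ Z : ℝ, P < Z → 0 < g Z := by
    intro Z hZ
    have := hApos Z (lt_trans hP0 hZ)
    have := hBpos Z hZ
    rw [hgdef]; positivity
  -- strict antitonicity
  have hanti : StrictAntiOn g (Set.Ioi P) := by
    intro a ha b hb hab
    simp only [Set.mem_Ioi] at ha hb
    have h1 : Faux β (-b) < Faux β (-a) :=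
      Faux_lt β (-b) (-a) hβ.le (by linarith) (by linarith)
    have h2 : Faux (ε * β) (P - b) < Faux (ε * β) (P - a) :=
      Faux_lt (ε * β) (P - b) (P - a) hεβ (by linarith) (by linarith)
    have hA : 0 < Faux β (-b) := hApos b (lt_trans hP0 hb)
    have hB : 0 < Faux (ε * β) (P - b) := hBpos b hb
    show Faux β (-b) * (Faux (ε * β) (P - b) / c2) < Faux β (-a) * (Faux (ε * β) (P - a) / c2)
    have h3 := mul_lt_mul'' h1 h2 hA.le hB.le
    calc Faux β (-b) * (Faux (ε * β) (P - b) / c2)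
        = Faux β (-b) * Faux (ε * β) (P - b) / c2 := by ring
      _ < Faux β (-a) * Faux (ε * β) (P - a) / c2 := div_lt_div_of_pos_right h3 hc2
      _ = Faux β (-a) * (Faux (ε * β) (P - a) / c2) := by ring
  -- continuity on Ioi P
  have hcont : ContinuousOn g (Set.Ioi P) := by
    intro Z hZ
    simp only [Set.mem_Ioi] at hZ
    have hZ0 : 0 < Z := lt_trans hP0 hZ
    have hA : ContinuousAt (fun Z : ℝ => Faux β (-Z)) Z := by
      have h1 : ContinuousAt (Faux β) (-Z) :=
        (Faux_contOn β (-(P + Z) / 2) hβ.le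
          (summ_aux β (-(P + Z) / 2) hβ.le (by linarith))).continuousAt
          (Iic_mem_nhds (by linarith))
      exact h1.comp (continuous_neg.continuousAt)
    have hB : ContinuousAt (fun Z : ℝ => Faux (ε * β) (P - Z)) Z := by
      have h1 : ContinuousAt (Faux (ε * β)) (P - Z) :=
        (Faux_contOn (ε * β) ((P - Z) / 2) hεβ
          (summ_aux (ε * β) ((P - Z) / 2) hεβ (by linarith))).continuousAt
          (Iic_mem_nhds (by linarith))
      exact h1.comp ((continuous_const.sub continuous_id).continuousAt)
    exact (hA.mul (hB.div_const c2)).continuousWithinAt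
  -- tendsto 0 at top
  have htend : Tendsto g atTop (nhds 0) := by
    set Z0 : ℝ := P + 1 with hZ0def
    set A0 : ℝ := Faux β (-Z0) with hA0def
    set B0 : ℝ := Faux (ε * β) (P - Z0) with hB0def
    have hA0 : 0 < A0 := hApos Z0 (by simp [hZ0def]; linarith)
    have hB0 : 0 < B0 := hBpos Z0 (by simp [hZ0def])
    have hbound : ∀ Z : ℝ, Z0 ≤ Z → g Z ≤ A0 * B0 / c2 * Real.exp (Z0 - Z) := by
      intro Z hZ
      have hA := Faux_le β (-Z) (-Z0) hβ.le (by simp [hZ0def]; linarith) (by linarith)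
      rw [show -Z - -Z0 = Z0 - Z by ring] at hA
      have hB := Faux_le (ε * β) (P - Z) (P - Z0) hεβ (by simp [hZ0def]) (by linarith)
      rw [show P - Z - (P - Z0) = Z0 - Z by ring] at hB
      have he1 : Real.exp (Z0 - Z) ≤ 1 := Real.exp_le_one_iff.mpr (by linarith)
      have he0 : 0 < Real.exp (Z0 - Z) := Real.exp_pos _
      have hAZ : 0 < Faux β (-Z) := hApos Z (by linarith)
      have hBZ : 0 < Faux (ε * β) (P - Z) := hBpos Z (by linarith)
      have key : Faux β (-Z) * Faux (ε * β) (P - Z) ≤ Real.exp (Z0 - Z) * (A0 * B0) := by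
        have h1 : Faux β (-Z) * Faux (ε * β) (P - Z) ≤
            (Real.exp (Z0 - Z) * A0) * (Real.exp (Z0 - Z) * B0) :=
          mul_le_mul hA hB hBZ.le (by positivity)
        have h2 : Real.exp (Z0 - Z) * Real.exp (Z0 - Z) ≤ Real.exp (Z0 - Z) := by nlinarith
        nlinarith [mul_le_mul_of_nonneg_right h2 (mul_pos hA0 hB0).le]
      calc g Z = Faux β (-Z) * Faux (ε * β) (P - Z) / c2 := by rw [hgdef]; ring
        _ ≤ Real.exp (Z0 - Z) * (A0 * B0) / c2 := by gcongr
        _ = A0 * B0 / c2 * Real.exp (Z0 - Z) := by ring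
    have hup : Tendsto (fun Z : ℝ => A0 * B0 / c2 * Real.exp (Z0 - Z)) atTop (nhds 0) := by
      have h1 : Tendsto (fun Z : ℝ => Z0 - Z) atTop atBot :=
        tendsto_atBot_add_const_left atTop Z0 tendsto_neg_atTop_atBot |>.congr
          (fun Z => by ring)
      have h2 : Tendsto (fun Z : ℝ => Real.exp (Z0 - Z)) atTop (nhds 0) :=
        Real.tendsto_exp_atBot.comp h1
      have := h2.const_mul (A0 * B0 / c2)
      simpa using this
    refine squeeze_zero' ?_ ?_ hup
    · filter_upwards [eventually_ge_atTop Z0] with Z hZ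
      exact (hgpos Z (by linarith)).le
    · filter_upwards [eventually_ge_atTop Z0] with Z hZ
      exact hbound Z hZ
  -- existence of a point where g > 1, under the hypothesis
  have hcross : ∀ (_ : ε * β ≤ 1 ∨ (1 < ε * β ∧ 1 < g P)), ∃ Z1, P < Z1 ∧ 1 < g Z1 := by
    rintro (hle | ⟨hgt, hgP⟩)
    · -- divergence case
      set A1 : ℝ := Faux β (-(P + 1)) with hA1def
      have hA1 : 0 < A1 := hApos (P + 1) (by linarith)
      set M : ℝ := c2 / A1 with hMdef
      have hM : 0 < M := by positivity
      -- partial sums of the p-series diverge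
      have hdiv : Tendsto (fun N : ℕ => ∑ i ∈ Finset.range N, ((i : ℝ) + 2) ^ (-(ε * β)))
          atTop atTop := by
        have hhalf : Tendsto (fun N : ℕ =>
            (1 / 2 : ℝ) * ∑ i ∈ Finset.range N, 1 / ((i : ℝ) + 1)) atTop atTop :=
          Real.tendsto_sum_range_one_div_nat_succ_atTop.const_mul_atTop (by norm_num)
        refine tendsto_atTop_mono ?_ hhalf
        intro N
        rw [Finset.mul_sum]
        refine Finset.sum_le_sum fun i _ => ?_
        have h1 : ((i : ℝ) + 2) ^ (-(1 : ℝ)) ≤ ((i : ℝ) + 2) ^ (-(ε * β)) :=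
          Real.rpow_le_rpow_of_exponent_le (by nlinarith [Nat.cast_nonneg (α := ℝ) i])
            (by nlinarith)
        rw [Real.rpow_neg_one] at h1
        have h2 : (1 / 2 : ℝ) * (1 / ((i : ℝ) + 1)) ≤ ((i : ℝ) + 2)⁻¹ := by
          have e1 : (1 / 2 : ℝ) * (1 / ((i : ℝ) + 1)) = 1 / (2 * ((i : ℝ) + 1)) := by
            have hne : ((i : ℝ) + 1) ≠ 0 := by positivity
            field_simp
          rw [inv_eq_one_div, e1]
          exact one_div_le_one_div_of_le (by positivity)
            (by nlinarith [Nat.cast_nonneg (α := ℝ) i])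
        calc (1 / 2 : ℝ) * (1 / ((i : ℝ) + 1)) ≤ ((i : ℝ) + 2)⁻¹ := h2
          _ ≤ ((i : ℝ) + 2) ^ (-(ε * β)) := h1
      obtain ⟨N, hN⟩ := (hdiv.eventually_gt_atTop M).exists
      -- a continuous minorant near P
      set φ : ℝ → ℝ := fun Z =>
        Real.exp ((N : ℝ) * (P - Z)) * ∑ i ∈ Finset.range N, ((i : ℝ) + 2) ^ (-(ε * β))
        with hφdef
      have hφP : M < φ P := by simp [hφdef]; exact hN
      have hφcont : ContinuousAt φ P := by fun_prop
      have hev1 : ∀ᶠ Z in nhdsWithin P (Set.Ioi P), M < φ Z :=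
        (hφcont.continuousWithinAt.eventually (eventually_gt_nhds hφP))
      have hev2 : ∀ᶠ Z in nhdsWithin P (Set.Ioi P), Z < P + 1 :=
        eventually_nhdsWithin_of_eventually_nhds (eventually_lt_nhds (by linarith))
      obtain ⟨Z, hZM, hZlt, hZP⟩ := (hev1.and (hev2.and self_mem_nhdsWithin)).exists
      have hZP' : P < Z := hZP
      refine ⟨Z, hZP', ?_⟩
      have hsumZ : Summable
          (fun n : ℕ => ((n : ℝ) + 2) ^ (-(ε * β)) * Real.exp (((n : ℝ) + 1) * (P - Z))) :=
        summ_aux (ε * β) (P - Z) hεβ (by linarith)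
      have hBge : φ Z ≤ Faux (ε * β) (P - Z) := by
        rw [Faux]
        calc φ Z = ∑ i ∈ Finset.range N,
              Real.exp ((N : ℝ) * (P - Z)) * ((i : ℝ) + 2) ^ (-(ε * β)) := by
              simp only [hφdef]; rw [Finset.mul_sum]
          _ ≤ ∑ i ∈ Finset.range N,
              ((i : ℝ) + 2) ^ (-(ε * β)) * Real.exp (((i : ℝ) + 1) * (P - Z)) := by
              refine Finset.sum_le_sum fun i hi => ?_
              have hiN : (i : ℝ) + 1 ≤ (N : ℝ) := by
                exact_mod_cast Nat.succ_le_of_lt (Finset.mem_range.mp hi)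
              have hmono : Real.exp ((N : ℝ) * (P - Z)) ≤
                  Real.exp (((i : ℝ) + 1) * (P - Z)) :=
                Real.exp_le_exp.mpr (by nlinarith)
              have h0 : (0:ℝ) ≤ ((i : ℝ) + 2) ^ (-(ε * β)) := by positivity
              rw [mul_comm]
              exact mul_le_mul_of_nonneg_left hmono h0
          _ ≤ ∑' n : ℕ, ((n : ℝ) + 2) ^ (-(ε * β)) * Real.exp (((n : ℝ) + 1) * (P - Z)) :=
              Summable.sum_le_tsum _ (fun i _ => by positivity) hsumZ
      have hBM : M < Faux (ε * β) (P - Z) := lt_of_lt_of_le hZM hBge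
      have hAZ : A1 < Faux β (-Z) :=
        Faux_lt β (-(P + 1)) (-Z) hβ.le (by linarith) (by linarith)
      have hkey : c2 < Faux β (-Z) * Faux (ε * β) (P - Z) := by
        have h2 : c2 < Faux (ε * β) (P - Z) * A1 := (div_lt_iff₀ hA1).mp hBM
        calc c2 < Faux (ε * β) (P - Z) * A1 := h2
          _ ≤ Faux (ε * β) (P - Z) * Faux β (-Z) :=
              mul_le_mul_of_nonneg_left hAZ.le (hBpos Z hZP').le
          _ = Faux β (-Z) * Faux (ε * β) (P - Z) := mul_comm _ _
      show (1:ℝ) < Faux β (-Z) * (Faux (ε * β) (P - Z) / c2)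
      rw [mul_div_assoc']
      exact (one_lt_div hc2).mpr hkey
    · -- boundary-continuity case
      have hsum0 : Summable
          (fun n : ℕ => ((n : ℝ) + 2) ^ (-(ε * β)) * Real.exp (((n : ℝ) + 1) * 0)) :=
        summ_aux0 (ε * β) hgt 0 le_rfl
      have hA : ContinuousAt (fun Z : ℝ => Faux β (-Z)) P := by
        have h1 : ContinuousAt (Faux β) (-P) :=
          (Faux_contOn β (-P / 2) hβ.le
            (summ_aux β (-P / 2) hβ.le (by linarith))).continuousAt
            (Iic_mem_nhds (by linarith))
        exact h1.comp continuous_neg.continuousAt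
      have hB : ContinuousWithinAt (fun Z : ℝ => Faux (ε * β) (P - Z)) (Set.Ici P) P := by
        have h1 : ContinuousOn (Faux (ε * β)) (Set.Iic 0) := Faux_contOn (ε * β) 0 hεβ hsum0
        have h2 : ContinuousOn (fun Z : ℝ => Faux (ε * β) (P - Z)) (Set.Ici P) :=
          h1.comp ((continuous_const.sub continuous_id).continuousOn)
            (fun Z hZ => by
              simp only [Set.mem_Ici] at hZ
              simp only [Set.mem_Iic]
              linarith)
        exact h2.continuousWithinAt Set.self_mem_Ici
      have hgc : ContinuousWithinAt g (Set.Ici P) P :=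
        hA.continuousWithinAt.mul (hB.div_const c2)
      have hev : ∀ᶠ Z in nhdsWithin P (Set.Ici P), 1 < g Z :=
        hgc.eventually (eventually_gt_nhds hgP)
      have hev' : ∀ᶠ Z in nhdsWithin P (Set.Ioi P), 1 < g Z :=
        hev.filter_mono (nhdsWithin_mono P Set.Ioi_subset_Ici_self)
      obtain ⟨Z, h1Z, hZP⟩ := (hev'.and self_mem_nhdsWithin).exists
      exact ⟨Z, hZP, h1Z⟩

  -- assemble everything
  simp only [heq]
  refine ⟨?_, hcont, hanti, htend, ?_⟩
  · intro Z hZ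
    refine ⟨?_, summ_aux (ε * β) (P - Z) hεβ (by linarith)⟩
    simpa only [neg_mul_comm] using summ_aux β (-Z) hβ.le (by linarith)
  · intro hyp
    obtain ⟨Z1, hZ1P, hgZ1⟩ := hcross hyp
    obtain ⟨Z2, hgZ2, hZ12⟩ := ((htend.eventually (eventually_lt_nhds zero_lt_one)).and
      (eventually_gt_atTop Z1)).exists
    have hIcc : Set.Icc Z1 Z2 ⊆ Set.Ioi P := fun x hx => lt_of_lt_of_le hZ1P hx.1
    obtain ⟨Zc, hZcm, hgZc⟩ :=
      intermediate_value_Icc' hZ12.le (hcont.mono hIcc) ⟨hgZ2.le, hgZ1.le⟩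
    have hZcP : P < Zc := lt_of_lt_of_le hZ1P hZcm.1
    refine ⟨Zc, ⟨hZcP, fun Z hZ => ?_, fun Z hPZ hZZc => ?_, hgZc⟩, ?_⟩
    · calc g Z < g Zc :=
          hanti (Set.mem_Ioi.mpr hZcP) (Set.mem_Ioi.mpr (by linarith)) hZ
        _ = 1 := hgZc
    · calc (1:ℝ) = g Zc := hgZc.symm
        _ < g Z := hanti (Set.mem_Ioi.mpr hPZ) (Set.mem_Ioi.mpr hZcP) hZZc
    · rintro y ⟨hyP, hylt, hygt, hy1⟩
      rcases lt_trichotomy y Zc with h | h | h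
      · have := hylt Zc h
        rw [hgZc] at this
        exact absurd this (lt_irrefl 1)
      · exact h
      · have := hygt Zc hZcP h
        rw [hgZc] at this
        exact absurd this (lt_irrefl 1)
end

section
/- Fix real parameters α, γ, δ, ε > 0. If β > 0 satisfies εβ > 1 and (∑_{n=1}^∞ (n+1)^{-β} e^{-n·P₃₄(β)})·(ζ(εβ) - 1)/(1 + e^{δβ})² = 1, then εβ < 2. -/
lemma hasSum_shift_two : HasSum (fun n : ℕ => ((n : ℝ) + 1) ^ (-(2:ℝ))) (Real.pi ^ 2 / 6) := by
  have h0 : HasSum (fun n : ℕ => (1 : ℝ) / (n : ℝ) ^ 2) (Real.pi ^ 2 / 6) := hasSum_zeta_two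
  have h1 : HasSum (fun n : ℕ => (1 : ℝ) / ((n + 1 : ℕ) : ℝ) ^ 2) (Real.pi ^ 2 / 6) :=
    (hasSum_nat_add_iff (f := fun n : ℕ => (1 : ℝ) / (n : ℝ) ^ 2) 1).mpr (by simpa using h0)
  refine h1.congr_fun fun n => ?_
  rw [show ((n : ℝ) + 1) = (((n + 1 : ℕ) : ℝ)) by push_cast; ring]
  rw [Real.rpow_neg (by positivity), show (2:ℝ) = ((2:ℕ):ℝ) by norm_num,
    Real.rpow_natCast]
  norm_num

/-- If `β > 0` satisfies `εβ > 1` and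
`Σ₂(P₃₄(β),β) · (ζ(εβ) - 1)/(1 + e^{δβ})² = 1`, then `εβ < 2`. -/
theorem stmt_5 (α γ δ ε β : ℝ) (hα : 0 < α) (hγ : 0 < γ) (hδ : 0 < δ) (hε : 0 < ε)
    (hβ : 0 < β) (hεβ : 1 < ε * β)
    (heq : S2 β (P34 γ δ β) * (zetaR (ε * β) - 1) / (1 + Real.exp (δ * β)) ^ 2 = 1) :
    ε * β < 2 := by
  by_contra hcon
  push_neg at hcon
  set s := ε * β with hs
  set Z := P34 γ δ β with hZdef
  have hexp1 : 1 < Real.exp (δ * β) := by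
    rw [Real.one_lt_exp_iff]; positivity
  have hZ : Real.log 2 ≤ Z := by
    have : Real.log 2 ≤ Real.log (1 + Real.exp (δ * β)) := by
      apply Real.log_le_log (by norm_num)
      linarith
    have hγβ : 0 < γ * β := by positivity
    simp only [hZdef, P34]
    linarith
  -- term bound for S2
  have hterm : ∀ n : ℕ, ((n : ℝ) + 2) ^ (-β) * Real.exp (-((n : ℝ) + 1) * Z)
      ≤ (1/2 : ℝ) ^ (n + 1) := by
    intro n
    have hn : (0:ℝ) ≤ (n:ℝ) := Nat.cast_nonneg n
    have h1 : ((n : ℝ) + 2) ^ (-β) ≤ 1 :=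
      Real.rpow_le_one_of_one_le_of_nonpos (by linarith) (by linarith)
    have h2 : Real.exp (-((n : ℝ) + 1) * Z) ≤ (1/2 : ℝ) ^ (n + 1) := by
      have heqn : Real.exp (-((n : ℝ) + 1) * Z) = Real.exp (-Z) ^ (n + 1) := by
        rw [← Real.exp_nat_mul]; congr 1; push_cast; ring
      rw [heqn]
      have hle : Real.exp (-Z) ≤ 1/2 :=
        calc Real.exp (-Z) ≤ Real.exp (-Real.log 2) := Real.exp_le_exp.mpr (neg_le_neg hZ)
          _ = 1/2 := by
              rw [Real.exp_neg, Real.exp_log (by norm_num : (0:ℝ) < 2)]; norm_num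
      exact pow_le_pow_left₀ (le_of_lt (Real.exp_pos _)) hle (n + 1)
    calc ((n : ℝ) + 2) ^ (-β) * Real.exp (-((n : ℝ) + 1) * Z)
        ≤ 1 * ((1/2 : ℝ) ^ (n + 1)) := by
          apply mul_le_mul h1 h2 (le_of_lt (Real.exp_pos _)) zero_le_one
      _ = (1/2 : ℝ) ^ (n + 1) := one_mul _
  have hgeo : HasSum (fun n : ℕ => (1/2 : ℝ) ^ (n + 1)) 1 := by
    have h := hasSum_geometric_of_lt_one (by norm_num : (0:ℝ) ≤ 1/2) (by norm_num : (1/2:ℝ) < 1)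
    have := h.mul_left (1/2 : ℝ)
    norm_num at this
    refine this.congr_fun fun n => ?_
    rw [pow_succ]; ring
  have htermnonneg : ∀ n : ℕ, 0 ≤ ((n : ℝ) + 2) ^ (-β) * Real.exp (-((n : ℝ) + 1) * Z) := by
    intro n; positivity
  have hS2sum : Summable (fun n : ℕ => ((n : ℝ) + 2) ^ (-β) * Real.exp (-((n : ℝ) + 1) * Z)) :=
    Summable.of_nonneg_of_le htermnonneg hterm hgeo.summable
  have hS2le : S2 β Z ≤ 1 :=
    calc S2 β Z ≤ ∑' n : ℕ, (1/2 : ℝ) ^ (n + 1) :=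
          Summable.tsum_le_tsum hterm hS2sum hgeo.summable
      _ = 1 := hgeo.tsum_eq
  have hS2pos : 0 < S2 β Z := by
    rw [S2]
    exact Summable.tsum_pos hS2sum htermnonneg 0 (by positivity)
  -- zeta bound
  have hzsum2 : Summable (fun n : ℕ => ((n : ℝ) + 1) ^ (-(2:ℝ))) := hasSum_shift_two.summable
  have hztermle : ∀ n : ℕ, ((n : ℝ) + 1) ^ (-s) ≤ ((n : ℝ) + 1) ^ (-(2:ℝ)) := by
    intro n
    apply Real.rpow_le_rpow_of_exponent_le (by linarith [Nat.cast_nonneg (α := ℝ) n])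
    linarith
  have hzsum : Summable (fun n : ℕ => ((n : ℝ) + 1) ^ (-s)) :=
    Summable.of_nonneg_of_le (fun n => by positivity) hztermle hzsum2
  have hzle : zetaR s ≤ Real.pi ^ 2 / 6 :=
    calc zetaR s ≤ ∑' n : ℕ, ((n : ℝ) + 1) ^ (-(2:ℝ)) :=
          Summable.tsum_le_tsum hztermle hzsum hzsum2
      _ = Real.pi ^ 2 / 6 := hasSum_shift_two.tsum_eq
  have hpi : Real.pi ^ 2 / 6 < 5 := by
    nlinarith [Real.pi_lt_d2, Real.pi_pos]
  -- from heq
  have hsq : (0:ℝ) < (1 + Real.exp (δ * β)) ^ 2 := by positivity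
  have heq' : S2 β Z * (zetaR s - 1) = (1 + Real.exp (δ * β)) ^ 2 := by
    field_simp at heq
    linarith [heq]
  have h4 : (4:ℝ) < (1 + Real.exp (δ * β)) ^ 2 := by nlinarith
  have hz4 : 4 < zetaR s - 1 := by
    nlinarith [hS2pos, hS2le, heq', h4]
  linarith
end

section
/- Fix real parameters α, γ, δ, ε > 0 and fix β > 0. Suppose Z̃ > P₃₄(β) satisfies Σ₂(Z̃,β)·Σ₃(Z̃,β) = 1. Then the function λ(Z,β) = Σ₁(Z,β) + Σ₂(Z,β)·e^{-αβ-Z}/(1 - Σ₂(Z,β)·Σ₃(Z,β)) is well defined, continuous and strictly decreasing in Z on (Z̃, ∞); λ(Z,β) → +∞ as Z decreases to Z̃ and λ(Z,β) → 0 as Z → +∞. Consequently there is a unique Z* ∈ (Z̃, ∞) with λ(Z*,β) = 1. (First part of Lemma 2: for β < β₁ the implicit equation λ_{Z,β,[1]} = 1 has a unique solution Z = P(β) > Z̃_c(β).) -/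
open Filter

/-- `Σ₁(Z,β) = ∑_{n=1}^∞ e^{-n(αβ+Z)}` (indexed by `n : ℕ` via `n ↦ n+1`). -/
noncomputable def S1 (α β Z : ℝ) : ℝ := ∑' n : ℕ, Real.exp (-((n : ℝ) + 1) * (α * β + Z))

/-- `λ(Z,β) = Σ₁(Z,β) + Σ₂(Z,β)·e^{-αβ-Z}/(1 - Σ₂(Z,β)·Σ₃(Z,β))`. -/
noncomputable def lam (α γ δ ε β Z : ℝ) : ℝ :=
  S1 α β Z + S2 β Z * Real.exp (-(α * β) - Z) / (1 - S2 β Z * S3 γ δ ε β Z)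

lemma summable_exp_seq {c : ℝ} (hc : c < 0) :
    Summable (fun n : ℕ => Real.exp (((n : ℝ) + 1) * c)) := by
  have h : (fun n : ℕ => Real.exp (((n:ℝ)+1)*c)) = fun n => Real.exp c ^ n * Real.exp c := by
    funext n
    rw [← Real.exp_nat_mul, ← Real.exp_add]; ring_nf
  rw [h]
  exact (summable_geometric_of_lt_one (Real.exp_pos c).le
    (Real.exp_lt_one_iff.2 hc)).mul_right _

lemma summable_pow_exp {a c : ℝ} (ha : a ≤ 0) (hc : c < 0) :
    Summable (fun n : ℕ => ((n:ℝ)+2) ^ a * Real.exp (((n:ℝ)+1)*c)) := by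
  refine (summable_exp_seq hc).of_nonneg_of_le
    (fun n => mul_nonneg (Real.rpow_nonneg (by positivity) _) (Real.exp_pos _).le)
    (fun n => ?_)
  calc ((n:ℝ)+2) ^ a * Real.exp (((n:ℝ)+1)*c)
      ≤ 1 * Real.exp (((n:ℝ)+1)*c) := by
        apply mul_le_mul_of_nonneg_right
          (Real.rpow_le_one_of_one_le_of_nonpos
            (by have := n.cast_nonneg (α := ℝ); linarith) ha) (Real.exp_pos _).le
    _ = Real.exp (((n:ℝ)+1)*c) := one_mul _

lemma P34_pos {γ δ β : ℝ} (hγ : 0 < γ) (hβ : 0 < β) : 0 < P34 γ δ β := by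
  have h1 : 0 < Real.log (1 + Real.exp (δ*β)) :=
    Real.log_pos (by nlinarith [Real.exp_pos (δ*β)])
  have h2 : 0 < γ * β := mul_pos hγ hβ
  unfold P34; linarith

section Main

variable {α γ δ ε β : ℝ}

lemma sum1 {Z : ℝ} (h : 0 < α*β + Z) :
    Summable (fun n : ℕ => Real.exp (-((n:ℝ)+1) * (α * β + Z))) := by
  have := summable_exp_seq (c := -(α*β+Z)) (by linarith)
  exact this.congr fun n => congrArg Real.exp (by ring)

lemma sum2 {Z : ℝ} (hβ : 0 < β) (h : 0 < Z) :
    Summable (fun n : ℕ => ((n:ℝ)+2) ^ (-β) * Real.exp (-((n:ℝ)+1) * Z)) := by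
  have := summable_pow_exp (a := -β) (c := -Z) (by linarith) (by linarith)
  refine this.congr fun n => ?_
  have : (((n:ℝ)+1) * -Z) = (-((n:ℝ)+1) * Z) := by ring
  rw [this]

lemma sum3 {Z : ℝ} (hεβ : 0 < ε*β) (h : P34 γ δ β < Z) :
    Summable (fun n : ℕ =>
      ((n:ℝ)+2) ^ (-(ε*β)) * Real.exp (((n:ℝ)+1) * (P34 γ δ β - Z))) :=
  summable_pow_exp (by linarith) (by linarith)

lemma S1_pos {Z : ℝ} (h : 0 < α*β + Z) : 0 < S1 α β Z :=
  Summable.tsum_pos (sum1 h) (fun n => (Real.exp_pos _).le) 0 (Real.exp_pos _)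

lemma S2_pos {Z : ℝ} (hβ : 0 < β) (h : 0 < Z) : 0 < S2 β Z :=
  Summable.tsum_pos (sum2 hβ h) (fun n => mul_nonneg (Real.rpow_nonneg (by positivity) _)
    (Real.exp_pos _).le) 0
    (mul_pos (Real.rpow_pos_of_pos (by norm_num) _) (Real.exp_pos _))

lemma S3_pos {Z : ℝ} (hεβ : 0 < ε*β) (h : P34 γ δ β < Z) : 0 < S3 γ δ ε β Z := by
  apply div_pos
  · exact Summable.tsum_pos (sum3 hεβ h) (fun n => mul_nonneg (Real.rpow_nonneg (by positivity) _)
      (Real.exp_pos _).le) 0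
      (mul_pos (Real.rpow_pos_of_pos (by norm_num) _) (Real.exp_pos _))
  · positivity

lemma S1_lt {Z W : ℝ} (h : 0 < α*β + Z) (hZW : Z < W) : S1 α β W < S1 α β Z := by
  apply Summable.tsum_lt_tsum_of_nonneg (i := 0)
  · exact fun n => (Real.exp_pos _).le
  · intro n
    apply Real.exp_le_exp.2
    have : (0:ℝ) < (n:ℝ) + 1 := by positivity
    nlinarith
  · apply Real.exp_lt_exp.2; nlinarith
  · exact sum1 h

lemma S2_le {Z W : ℝ} (hβ : 0 < β) (h : 0 < Z) (hZW : Z ≤ W) : S2 β W ≤ S2 β Z := by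
  apply Summable.tsum_le_tsum _ (sum2 hβ (lt_of_lt_of_le h hZW)) (sum2 hβ h)
  intro n
  apply mul_le_mul_of_nonneg_left _ (Real.rpow_nonneg (by positivity) _)
  apply Real.exp_le_exp.2
  have : (0:ℝ) < (n:ℝ) + 1 := by positivity
  nlinarith

lemma S2_lt {Z W : ℝ} (hβ : 0 < β) (h : 0 < Z) (hZW : Z < W) : S2 β W < S2 β Z := by
  apply Summable.tsum_lt_tsum_of_nonneg (i := 0)
  · exact fun n => mul_nonneg (Real.rpow_nonneg (by positivity) _) (Real.exp_pos _).le
  · intro n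
    apply mul_le_mul_of_nonneg_left _ (Real.rpow_nonneg (by positivity) _)
    apply Real.exp_le_exp.2
    have : (0:ℝ) < (n:ℝ) + 1 := by positivity
    nlinarith
  · apply mul_lt_mul_of_pos_left _ (Real.rpow_pos_of_pos (by norm_num) _)
    apply Real.exp_lt_exp.2; norm_num; linarith
  · exact sum2 hβ h

lemma S3aux_le {Z W : ℝ} (hεβ : 0 < ε*β) (h : P34 γ δ β < Z) (hZW : Z ≤ W) :
    (∑' n : ℕ, ((n:ℝ)+2) ^ (-(ε*β)) * Real.exp (((n:ℝ)+1) * (P34 γ δ β - W))) ≤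
    (∑' n : ℕ, ((n:ℝ)+2) ^ (-(ε*β)) * Real.exp (((n:ℝ)+1) * (P34 γ δ β - Z))) := by
  apply Summable.tsum_le_tsum _ (sum3 hεβ (lt_of_lt_of_le h hZW)) (sum3 hεβ h)
  intro n
  apply mul_le_mul_of_nonneg_left _ (Real.rpow_nonneg (by positivity) _)
  apply Real.exp_le_exp.2
  have : (0:ℝ) < (n:ℝ) + 1 := by positivity
  nlinarith

lemma S3_le {Z W : ℝ} (hεβ : 0 < ε*β) (h : P34 γ δ β < Z) (hZW : Z ≤ W) :
    S3 γ δ ε β W ≤ S3 γ δ ε β Z :=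
  div_le_div_of_nonneg_right (S3aux_le hεβ h hZW) (by positivity)

lemma S3_lt {Z W : ℝ} (hεβ : 0 < ε*β) (h : P34 γ δ β < Z) (hZW : Z < W) :
    S3 γ δ ε β W < S3 γ δ ε β Z := by
  apply div_lt_div_of_pos_right _ (by positivity)
  apply Summable.tsum_lt_tsum_of_nonneg (i := 0)
  · exact fun n => mul_nonneg (Real.rpow_nonneg (by positivity) _) (Real.exp_pos _).le
  · intro n
    apply mul_le_mul_of_nonneg_left _ (Real.rpow_nonneg (by positivity) _)
    apply Real.exp_le_exp.2
    have : (0:ℝ) < (n:ℝ) + 1 := by positivity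
    nlinarith
  · apply mul_lt_mul_of_pos_left _ (Real.rpow_pos_of_pos (by norm_num) _)
    apply Real.exp_lt_exp.2
    have : (0:ℝ) < (0:ℕ) + 1 := by norm_num
    nlinarith
  · exact sum3 hεβ h

end Main

section Cont

variable {α γ δ ε β : ℝ}

lemma S1_contOn (hαβ : 0 < α*β) {Zt : ℝ} (hZt : 0 < Zt) :
    ContinuousOn (fun Z => S1 α β Z) (Set.Ici Zt) := by
  unfold S1
  apply continuousOn_tsum (u := fun n : ℕ => Real.exp (-((n:ℝ)+1) * (α*β+Zt)))
  · intro n; fun_prop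
  · exact sum1 (by linarith)
  · intro n Z hZ
    rw [Real.norm_eq_abs, abs_of_pos (Real.exp_pos _)]
    apply Real.exp_le_exp.2
    have h1 : (0:ℝ) < (n:ℝ)+1 := by positivity
    have h2 : Zt ≤ Z := hZ
    nlinarith

lemma S2_contOn (hβ : 0 < β) {Zt : ℝ} (hZt : 0 < Zt) :
    ContinuousOn (fun Z => S2 β Z) (Set.Ici Zt) := by
  unfold S2
  apply continuousOn_tsum
    (u := fun n : ℕ => ((n:ℝ)+2) ^ (-β) * Real.exp (-((n:ℝ)+1) * Zt))
  · intro n; fun_prop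
  · exact sum2 hβ hZt
  · intro n Z hZ
    rw [Real.norm_eq_abs, abs_of_nonneg (by positivity)]
    apply mul_le_mul_of_nonneg_left _ (Real.rpow_nonneg (by positivity) _)
    apply Real.exp_le_exp.2
    have h1 : (0:ℝ) < (n:ℝ)+1 := by positivity
    have h2 : Zt ≤ Z := hZ
    nlinarith

lemma S3_contOn (hεβ : 0 < ε*β) {Zt : ℝ} (hZt : P34 γ δ β < Zt) :
    ContinuousOn (fun Z => S3 γ δ ε β Z) (Set.Ici Zt) := by
  unfold S3
  apply ContinuousOn.div_const
  apply continuousOn_tsum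
    (u := fun n : ℕ => ((n:ℝ)+2) ^ (-(ε*β)) * Real.exp (((n:ℝ)+1) * (P34 γ δ β - Zt)))
  · intro n; fun_prop
  · exact sum3 hεβ hZt
  · intro n Z hZ
    rw [Real.norm_eq_abs, abs_of_nonneg (by positivity)]
    apply mul_le_mul_of_nonneg_left _ (Real.rpow_nonneg (by positivity) _)
    apply Real.exp_le_exp.2
    have h1 : (0:ℝ) < (n:ℝ)+1 := by positivity
    have h2 : Zt ≤ Z := hZ
    nlinarith

end Cont

/-- First part of Lemma 2: fix `β > 0` and `Z̃ > P₃₄(β)` with `Σ₂(Z̃,β)·Σ₃(Z̃,β) = 1`.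
Then on `(Z̃,∞)` all series converge and `Σ₂Σ₃ < 1` (so `λ` is well defined), `λ(·,β)` is
continuous and strictly decreasing, tends to `+∞` at `Z̃⁺` and to `0` at `+∞`; hence
there is a unique `Z* ∈ (Z̃,∞)` with `λ(Z*,β) = 1`. -/
theorem stmt_7 (α γ δ ε β : ℝ) (hα : 0 < α) (hγ : 0 < γ) (hδ : 0 < δ) (hε : 0 < ε)
    (hβ : 0 < β) (Zt : ℝ) (hZt : P34 γ δ β < Zt)
    (hZteq : S2 β Zt * S3 γ δ ε β Zt = 1) :
    (∀ Z, Zt < Z →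
      Summable (fun n : ℕ => Real.exp (-((n : ℝ) + 1) * (α * β + Z))) ∧
      Summable (fun n : ℕ => ((n : ℝ) + 2) ^ (-β) * Real.exp (-((n : ℝ) + 1) * Z)) ∧
      Summable (fun n : ℕ =>
        ((n : ℝ) + 2) ^ (-(ε * β)) * Real.exp (((n : ℝ) + 1) * (P34 γ δ β - Z))) ∧
      S2 β Z * S3 γ δ ε β Z < 1) ∧
    ContinuousOn (fun Z => lam α γ δ ε β Z) (Set.Ioi Zt) ∧
    StrictAntiOn (fun Z => lam α γ δ ε β Z) (Set.Ioi Zt) ∧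
    Tendsto (fun Z => lam α γ δ ε β Z) (nhdsWithin Zt (Set.Ioi Zt)) atTop ∧
    Tendsto (fun Z => lam α γ δ ε β Z) atTop (nhds 0) ∧
    ∃! Zstar, Zt < Zstar ∧ lam α γ δ ε β Zstar = 1 := by
  have hP : 0 < P34 γ δ β := P34_pos hγ hβ
  have hZt0 : 0 < Zt := hP.trans hZt
  have hεβ : 0 < ε * β := mul_pos hε hβ
  have hαβ : 0 < α * β := mul_pos hα hβ
  -- the product `S2 * S3` strictly below 1 on `Ioi Zt`
  have hprod_lt : ∀ Z, Zt < Z → S2 β Z * S3 γ δ ε β Z < 1 := by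
    intro Z hZ
    calc S2 β Z * S3 γ δ ε β Z
        < S2 β Zt * S3 γ δ ε β Zt :=
          mul_lt_mul'' (S2_lt hβ hZt0 hZ) (S3_lt hεβ hZt hZ)
            (S2_pos hβ (hZt0.trans hZ)).le (S3_pos hεβ (hZt.trans hZ)).le
      _ = 1 := hZteq
  have key : ∀ Z, Zt < Z →
      Summable (fun n : ℕ => Real.exp (-((n : ℝ) + 1) * (α * β + Z))) ∧
      Summable (fun n : ℕ => ((n : ℝ) + 2) ^ (-β) * Real.exp (-((n : ℝ) + 1) * Z)) ∧
      Summable (fun n : ℕ =>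
        ((n : ℝ) + 2) ^ (-(ε * β)) * Real.exp (((n : ℝ) + 1) * (P34 γ δ β - Z))) ∧
      S2 β Z * S3 γ δ ε β Z < 1 := by
    intro Z hZ
    exact ⟨sum1 (by nlinarith), sum2 hβ (by linarith), sum3 hεβ (by linarith), hprod_lt Z hZ⟩
  have hDpos : ∀ Z, Zt < Z → 0 < 1 - S2 β Z * S3 γ δ ε β Z := by
    intro Z hZ; linarith [hprod_lt Z hZ]
  -- continuity pieces on `Ici Zt`
  have hc1 : ContinuousOn (fun Z => S1 α β Z) (Set.Ici Zt) := S1_contOn hαβ hZt0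
  have hc2 : ContinuousOn (fun Z => S2 β Z) (Set.Ici Zt) := S2_contOn hβ hZt0
  have hc3 : ContinuousOn (fun Z => S3 γ δ ε β Z) (Set.Ici Zt) := S3_contOn hεβ hZt
  have hce : Continuous (fun Z : ℝ => Real.exp (-(α * β) - Z)) := by fun_prop
  have hcnum : ContinuousOn (fun Z => S2 β Z * Real.exp (-(α * β) - Z)) (Set.Ici Zt) :=
    hc2.mul hce.continuousOn
  have hcD : ContinuousOn (fun Z => 1 - S2 β Z * S3 γ δ ε β Z) (Set.Ici Zt) :=
    continuousOn_const.sub (hc2.mul hc3)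
  have hlamc : ContinuousOn (fun Z => lam α γ δ ε β Z) (Set.Ioi Zt) := by
    unfold lam
    exact (hc1.mono Set.Ioi_subset_Ici_self).add
      (((hcnum.mono Set.Ioi_subset_Ici_self).div
        (hcD.mono Set.Ioi_subset_Ici_self)) (fun Z hZ => (hDpos Z hZ).ne'))
  -- strict antitonicity
  have hanti : StrictAntiOn (fun Z => lam α γ δ ε β Z) (Set.Ioi Zt) := by
    intro x hx y hy hxy
    have hx' : Zt < x := hx
    have hy' : Zt < y := hy
    have h1 : S1 α β y < S1 α β x := S1_lt (by nlinarith) hxy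
    have hnum : S2 β y * Real.exp (-(α * β) - y) < S2 β x * Real.exp (-(α * β) - x) :=
      mul_lt_mul'' (S2_lt hβ (hZt0.trans hx') hxy) (Real.exp_lt_exp.2 (by linarith))
        (S2_pos hβ (by linarith)).le (Real.exp_pos _).le
    have hnumy_pos : 0 < S2 β y * Real.exp (-(α * β) - y) :=
      mul_pos (S2_pos hβ (by linarith)) (Real.exp_pos _)
    have hDx : 0 < 1 - S2 β x * S3 γ δ ε β x := hDpos x hx'
    have hDy : 0 < 1 - S2 β y * S3 γ δ ε β y := hDpos y hy'
    have hpp : S2 β y * S3 γ δ ε β y < S2 β x * S3 γ δ ε β x :=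
      mul_lt_mul'' (S2_lt hβ (hZt0.trans hx') hxy) (S3_lt hεβ (hZt.trans hx') hxy)
        (S2_pos hβ (by linarith)).le (S3_pos hεβ (by linarith)).le
    have hDxy : 1 - S2 β x * S3 γ δ ε β x ≤ 1 - S2 β y * S3 γ δ ε β y := by linarith
    have hdiv : S2 β y * Real.exp (-(α * β) - y) / (1 - S2 β y * S3 γ δ ε β y)
        < S2 β x * Real.exp (-(α * β) - x) / (1 - S2 β x * S3 γ δ ε β x) := by
      calc S2 β y * Real.exp (-(α * β) - y) / (1 - S2 β y * S3 γ δ ε β y)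
          ≤ S2 β y * Real.exp (-(α * β) - y) / (1 - S2 β x * S3 γ δ ε β x) :=
            div_le_div_of_nonneg_left hnumy_pos.le hDx hDxy
        _ < S2 β x * Real.exp (-(α * β) - x) / (1 - S2 β x * S3 γ δ ε β x) :=
            div_lt_div_of_pos_right hnum hDx
    exact add_lt_add h1 hdiv
  -- tendsto at `Zt⁺`
  have hmem : Zt ∈ Set.Ici Zt := Set.self_mem_Ici
  have hmono := nhdsWithin_mono Zt (Set.Ioi_subset_Ici_self (a := Zt))
  have t1 : Tendsto (fun Z => S1 α β Z) (nhdsWithin Zt (Set.Ioi Zt)) (nhds (S1 α β Zt)) :=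
    (hc1 Zt hmem).mono_left hmono
  have tnum : Tendsto (fun Z => S2 β Z * Real.exp (-(α * β) - Z))
      (nhdsWithin Zt (Set.Ioi Zt)) (nhds (S2 β Zt * Real.exp (-(α * β) - Zt))) :=
    (hcnum Zt hmem).mono_left hmono
  have hnumZt_pos : 0 < S2 β Zt * Real.exp (-(α * β) - Zt) :=
    mul_pos (S2_pos hβ hZt0) (Real.exp_pos _)
  have tD : Tendsto (fun Z => 1 - S2 β Z * S3 γ δ ε β Z)
      (nhdsWithin Zt (Set.Ioi Zt)) (nhds 0) := by
    have h0 : (fun Z => 1 - S2 β Z * S3 γ δ ε β Z) Zt = 0 := by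
      show 1 - S2 β Zt * S3 γ δ ε β Zt = 0
      rw [hZteq]; ring
    have := (hcD Zt hmem).mono_left hmono
    rwa [h0] at this
  have tD' : Tendsto (fun Z => 1 - S2 β Z * S3 γ δ ε β Z)
      (nhdsWithin Zt (Set.Ioi Zt)) (nhdsWithin 0 (Set.Ioi 0)) :=
    tendsto_nhdsWithin_of_tendsto_nhds_of_eventually_within _ tD
      (eventually_nhdsWithin_of_forall (fun Z hZ => hDpos Z hZ))
  have tinv : Tendsto (fun Z => (1 - S2 β Z * S3 γ δ ε β Z)⁻¹)
      (nhdsWithin Zt (Set.Ioi Zt)) atTop := tendsto_inv_nhdsGT_zero.comp tD'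
  have tfrac : Tendsto (fun Z => S2 β Z * Real.exp (-(α * β) - Z) *
      (1 - S2 β Z * S3 γ δ ε β Z)⁻¹) (nhdsWithin Zt (Set.Ioi Zt)) atTop :=
    tnum.pos_mul_atTop hnumZt_pos tinv
  have htop : Tendsto (fun Z => lam α γ δ ε β Z) (nhdsWithin Zt (Set.Ioi Zt)) atTop := by
    have heq : (fun Z => lam α γ δ ε β Z) = fun Z => S1 α β Z +
        S2 β Z * Real.exp (-(α * β) - Z) * (1 - S2 β Z * S3 γ δ ε β Z)⁻¹ := by
      funext Z; rw [lam, div_eq_mul_inv]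
    rw [heq]
    exact tendsto_atTop_add_left_of_le' _ (S1 α β Zt - 1)
      (t1.eventually_const_le (by linarith)) tfrac
  -- tendsto to 0 at `atTop`
  have hzero : Tendsto (fun Z => lam α γ δ ε β Z) atTop (nhds 0) := by
    set Z₀ := Zt + 1 with hZ₀def
    have hZ₀ : Zt < Z₀ := by simp [hZ₀def]
    have hD₀ : 0 < 1 - S2 β Z₀ * S3 γ δ ε β Z₀ := hDpos Z₀ hZ₀
    have hBtends : Tendsto (fun Z => S1 α β Z₀ * Real.exp (Z₀ - Z) +
        S2 β Z₀ * Real.exp (-(α * β) - Z) / (1 - S2 β Z₀ * S3 γ δ ε β Z₀)) atTop (nhds 0) := by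
      have hbot : Tendsto (fun Z : ℝ => Z₀ - Z) atTop atBot := by
        simp only [sub_eq_add_neg]
        exact tendsto_atBot_add_const_left atTop Z₀ tendsto_neg_atTop_atBot
      have hbot2 : Tendsto (fun Z : ℝ => -(α * β) - Z) atTop atBot := by
        simp only [sub_eq_add_neg]
        exact tendsto_atBot_add_const_left atTop (-(α * β)) tendsto_neg_atTop_atBot
      have e1 : Tendsto (fun Z => S1 α β Z₀ * Real.exp (Z₀ - Z)) atTop (nhds 0) := by
        simpa using (Real.tendsto_exp_atBot.comp hbot).const_mul (S1 α β Z₀)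
      have e2 : Tendsto (fun Z => S2 β Z₀ * Real.exp (-(α * β) - Z) /
          (1 - S2 β Z₀ * S3 γ δ ε β Z₀)) atTop (nhds 0) := by
        simpa using (((Real.tendsto_exp_atBot.comp hbot2).const_mul (S2 β Z₀)).div_const
          (1 - S2 β Z₀ * S3 γ δ ε β Z₀))
      simpa using e1.add e2
    apply tendsto_of_tendsto_of_tendsto_of_le_of_le' tendsto_const_nhds hBtends
    · filter_upwards [eventually_ge_atTop Z₀] with Z hZ
      have hZ' : Zt < Z := lt_of_lt_of_le hZ₀ hZ
      have h1 : 0 ≤ S1 α β Z := tsum_nonneg (fun n => (Real.exp_pos _).le)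
      have h2 : 0 ≤ S2 β Z * Real.exp (-(α * β) - Z) / (1 - S2 β Z * S3 γ δ ε β Z) :=
        div_nonneg (mul_nonneg (S2_pos hβ (by linarith)).le (Real.exp_pos _).le)
          (hDpos Z hZ').le
      unfold lam
      linarith
    · filter_upwards [eventually_ge_atTop Z₀] with Z hZ
      have hZ' : Zt < Z := lt_of_lt_of_le hZ₀ hZ
      have hS1 : S1 α β Z ≤ S1 α β Z₀ * Real.exp (Z₀ - Z) := by
        have hsum₀ : Summable (fun n : ℕ => Real.exp (-((n:ℝ)+1) * (α * β + Z₀))) :=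
          sum1 (by nlinarith)
        have hle : ∀ n : ℕ, Real.exp (-((n:ℝ)+1) * (α * β + Z)) ≤
            Real.exp (-((n:ℝ)+1) * (α * β + Z₀)) * Real.exp (Z₀ - Z) := by
          intro n
          rw [← Real.exp_add]
          apply Real.exp_le_exp.2
          have h1 : (1:ℝ) ≤ (n:ℝ)+1 := by
            have := n.cast_nonneg (α := ℝ); linarith
          nlinarith
        calc S1 α β Z ≤ ∑' n : ℕ, Real.exp (-((n:ℝ)+1) * (α * β + Z₀)) * Real.exp (Z₀ - Z) :=
              Summable.tsum_le_tsum hle (sum1 (by nlinarith)) (hsum₀.mul_right _)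
          _ = S1 α β Z₀ * Real.exp (Z₀ - Z) := tsum_mul_right
      have hfrac : S2 β Z * Real.exp (-(α * β) - Z) / (1 - S2 β Z * S3 γ δ ε β Z) ≤
          S2 β Z₀ * Real.exp (-(α * β) - Z) / (1 - S2 β Z₀ * S3 γ δ ε β Z₀) := by
        have hnum_nonneg : 0 ≤ S2 β Z * Real.exp (-(α * β) - Z) :=
          mul_nonneg (S2_pos hβ (by linarith)).le (Real.exp_pos _).le
        have hDle : 1 - S2 β Z₀ * S3 γ δ ε β Z₀ ≤ 1 - S2 β Z * S3 γ δ ε β Z := by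
          have := mul_le_mul (S2_le hβ (by linarith) hZ) (S3_le hεβ (by linarith) hZ)
            (S3_pos hεβ (by linarith)).le (S2_pos hβ (by linarith)).le
          linarith
        calc S2 β Z * Real.exp (-(α * β) - Z) / (1 - S2 β Z * S3 γ δ ε β Z)
            ≤ S2 β Z * Real.exp (-(α * β) - Z) / (1 - S2 β Z₀ * S3 γ δ ε β Z₀) :=
              div_le_div_of_nonneg_left hnum_nonneg hD₀ hDle
          _ ≤ S2 β Z₀ * Real.exp (-(α * β) - Z) / (1 - S2 β Z₀ * S3 γ δ ε β Z₀) :=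
              div_le_div_of_nonneg_right
                (mul_le_mul_of_nonneg_right (S2_le hβ (by linarith) hZ)
                  (Real.exp_pos _).le) hD₀.le
      unfold lam
      linarith
  refine ⟨key, hlamc, hanti, htop, hzero, ?_⟩
  -- existence and uniqueness of `Zstar`
  obtain ⟨a, ha1, haZt⟩ := ((htop.eventually_gt_atTop 1).and self_mem_nhdsWithin).exists
  obtain ⟨b, hb1, hab⟩ :=
    ((hzero.eventually_lt_const zero_lt_one).and (eventually_ge_atTop a)).exists
  have hIcc : Set.Icc a b ⊆ Set.Ioi Zt := fun x hx => lt_of_lt_of_le haZt hx.1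
  obtain ⟨Zs, hZs, hZseq⟩ := intermediate_value_Icc' hab (hlamc.mono hIcc)
    ⟨hb1.le, ha1.le⟩
  refine ⟨Zs, ⟨hIcc hZs, hZseq⟩, ?_⟩
  rintro y ⟨hy, hyeq⟩
  have hZseq' : lam α γ δ ε β Zs = 1 := hZseq
  rcases lt_trichotomy y Zs with h | h | h
  · have := hanti (Set.mem_Ioi.2 hy) (hIcc hZs) h
    simp only at this
    rw [hyeq, hZseq'] at this
    exact absurd this (lt_irrefl 1)
  · exact h
  · have := hanti (hIcc hZs) (Set.mem_Ioi.2 hy) h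
    simp only at this
    rw [hyeq, hZseq'] at this
    exact absurd this (lt_irrefl 1)
end

section
/- Let Σ₂₃₄ be the subshift of {2,3,4}^ℕ in which the transitions 2→4 and 4→2 are forbidden, with left shift σ. If μ is a σ-invariant ergodic Borel probability measure on Σ₂₃₄ with μ([32]) = 0 (where [32] is the cylinder of sequences beginning 3,2), then either μ is the Dirac mass at the constant sequence 2^∞, or μ({3,4}^ℕ) = 1, i.e. μ is carried by the set of sequences using only the symbols 3 and 4. (Measure-theoretic content of Lemma 5 of the paper: an equilibrium state on Σ₂₃₄ gives zero weight to [32] if and only if P₂₃₄(β) = P₃₄(β).) -/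
open MeasureTheory

/-- The subshift `Σ₂₃₄ ⊆ {2,3,4}^ℕ` in which the transitions `2→4` and `4→2` are
forbidden. The alphabet `{2,3,4}` is modeled by `Fin 3` via `0 ↦ 2`, `1 ↦ 3`, `2 ↦ 4`. -/
abbrev Sigma234 : Type :=
  {x : ℕ → Fin 3 // ∀ i, ¬(x i = 0 ∧ x (i + 1) = 2) ∧ ¬(x i = 2 ∧ x (i + 1) = 0)}

/-- The left shift `σ` on `Σ₂₃₄`. -/
def shift234 (x : Sigma234) : Sigma234 :=
  ⟨fun i => x.1 (i + 1), fun i => x.2 (i + 1)⟩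

/-- The constant sequence `2^∞`. -/
def allTwo : Sigma234 := ⟨fun _ => 0, fun _ => by refine ⟨?_, ?_⟩ <;> rintro ⟨h1, h2⟩ <;> simp_all⟩

lemma meas_eval (i : ℕ) : Measurable (fun x : Sigma234 => x.1 i) :=
  (measurable_pi_apply i).comp measurable_subtype_coe

lemma shift234_iterate (n : ℕ) (x : Sigma234) (j : ℕ) :
    (shift234^[n] x).1 j = x.1 (j + n) := by
  induction n generalizing x with
  | zero => rfl
  | succ n ih =>
    rw [Function.iterate_succ_apply, ih]
    show x.1 (j + n + 1) = x.1 (j + (n + 1))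
    ring_nf

/-- Lemma 5 (measure-theoretic content): a shift-invariant ergodic probability measure
on `Σ₂₃₄` giving zero weight to the cylinder `[32]` is either the Dirac mass at `2^∞`,
or is carried by the set `{3,4}^ℕ` of sequences using only the symbols `3` and `4`. -/
theorem stmt_12 (μ : Measure Sigma234) [IsProbabilityMeasure μ]
    (herg : Ergodic shift234 μ)
    (h32 : μ {x : Sigma234 | x.1 0 = 1 ∧ x.1 1 = 0} = 0) :
    μ = Measure.dirac allTwo ∨ μ {x : Sigma234 | ∀ i, x.1 i = 1 ∨ x.1 i = 2} = 1 := by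
  set A : Set Sigma234 := {x | x.1 0 = 0} with hA
  have hAmeas : MeasurableSet A := meas_eval 0 (measurableSet_singleton 0)
  have hsub : shift234 ⁻¹' A \ A ⊆ {x : Sigma234 | x.1 0 = 1 ∧ x.1 1 = 0} := by
    rintro x ⟨h1, h0⟩
    have h1' : x.1 1 = 0 := h1
    have hc : ¬(x.1 0 = 2 ∧ x.1 1 = 0) := (x.2 0).2
    have h2 : x.1 0 ≠ 2 := fun h => hc ⟨h, h1'⟩
    have hkey : ∀ a : Fin 3, a ≠ 0 → a ≠ 2 → a = 1 := by decide
    exact ⟨hkey _ h0 h2, h1'⟩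
  have hle : shift234 ⁻¹' A ≤ᵐ[μ] A := by
    rw [MeasureTheory.ae_le_set]
    exact measure_mono_null hsub h32
  have h01 := herg.ae_empty_or_univ_of_preimage_ae_le' hAmeas.nullMeasurableSet hle
    (measure_ne_top μ A)
  have hiter : ∀ i : ℕ, μ {x : Sigma234 | x.1 i = 0} = μ A := by
    intro i
    have hset : {x : Sigma234 | x.1 i = 0} = shift234^[i] ⁻¹' A := by
      ext x
      simp only [Set.mem_preimage, hA, Set.mem_setOf_eq, shift234_iterate, Nat.zero_add]
    rw [hset]
    exact (herg.toMeasurePreserving.iterate i).measure_preimage hAmeas.nullMeasurableSet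
  rcases h01 with h0 | h1
  · -- μ A = 0
    right
    have hA0 : μ A = 0 := by simpa using measure_congr h0
    have hcompl : μ {x : Sigma234 | ∀ i, x.1 i = 1 ∨ x.1 i = 2}ᶜ = 0 := by
      have : {x : Sigma234 | ∀ i, x.1 i = 1 ∨ x.1 i = 2}ᶜ ⊆
          ⋃ i, {x : Sigma234 | x.1 i = 0} := by
        intro x hx
        simp only [Set.mem_compl_iff, Set.mem_setOf_eq, not_forall] at hx
        obtain ⟨i, hi⟩ := hx
        push_neg at hi
        have hkey : ∀ a : Fin 3, a ≠ 1 → a ≠ 2 → a = 0 := by decide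
        exact Set.mem_iUnion.2 ⟨i, hkey _ hi.1 hi.2⟩
      refine measure_mono_null this (measure_iUnion_null fun i => ?_)
      rw [hiter i, hA0]
    have hmeas : MeasurableSet {x : Sigma234 | ∀ i, x.1 i = 1 ∨ x.1 i = 2} := by
      have : {x : Sigma234 | ∀ i, x.1 i = 1 ∨ x.1 i = 2} =
          ⋂ i, ((fun x : Sigma234 => x.1 i) ⁻¹' {1, 2}) := by
        ext x; simp [Set.mem_iInter]
      rw [this]
      exact MeasurableSet.iInter fun i => meas_eval i (by measurability)
    rwa [prob_compl_eq_zero_iff hmeas] at hcompl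
  · -- μ A = 1
    left
    have hA1 : μ A = 1 := by
      have := measure_congr h1
      simpa using this
    have hsing : {allTwo} = ⋂ i, {x : Sigma234 | x.1 i = 0} := by
      ext x
      simp only [Set.mem_singleton_iff, Set.mem_iInter, Set.mem_setOf_eq]
      constructor
      · rintro rfl i; rfl
      · intro h
        apply Subtype.ext
        funext i
        exact h i
    have hmeasi : ∀ i : ℕ, MeasurableSet {x : Sigma234 | x.1 i = 0} := fun i =>
      meas_eval i (measurableSet_singleton 0)
    have h1all : μ {allTwo} = 1 := by
      rw [hsing]
      have : μ (⋂ i, {x : Sigma234 | x.1 i = 0})ᶜ = 0 := by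
        rw [Set.compl_iInter]
        refine measure_iUnion_null fun i => ?_
        rw [prob_compl_eq_zero_iff (hmeasi i), hiter i, hA1]
      rwa [prob_compl_eq_zero_iff (MeasurableSet.iInter hmeasi)] at this
    have hmeassing : MeasurableSet ({allTwo} : Set Sigma234) := by
      rw [hsing]; exact MeasurableSet.iInter hmeasi
    ext s hs
    rw [Measure.dirac_apply' _ hs]
    by_cases hmem : allTwo ∈ s
    · rw [Set.indicator_of_mem hmem]
      refine le_antisymm prob_le_one ?_
      calc (1 : ENNReal) = μ {allTwo} := h1all.symm
        _ ≤ μ s := measure_mono (Set.singleton_subset_iff.2 hmem)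
    · rw [Set.indicator_of_notMem hmem]
      have : s ⊆ ({allTwo} : Set Sigma234)ᶜ := fun y hy h => by
        simp only [Set.mem_singleton_iff] at h; exact hmem (h ▸ hy)
      refine measure_mono_null this ?_
      rwa [prob_compl_eq_zero_iff hmeassing]
end
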